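/- Let v : [0,∞) → [0,∞) be a non-decreasing function with v(ε) > 0 for all ε > 0, let 0 < c < 1, and suppose 0 < R and the (v,c)-central condition holds: for every ε ≥ 0, log ∫ exp(−v(ε)·r) d(P_W ⊗ μ) ≤ −c·v(ε)·R + v(ε)·ε. Then for every ε ≥ 0 and every η with 0 < η ≤ v(ε), gen ≤ ((1 − c)/c)·R̂ + (1/n) ∑_{i=1}^n ( I(W;Z_i)/(η·c) + ε/c ). -/

import Mathlib

open MeasureTheory Real

/-- Real-valued Kullback–Leibler divergence `D(P‖Q)`,
the integral of the log-likelihood ratio with respect to `P`. -/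
noncomputable def klReal {α : Type*} [MeasurableSpace α] (P Q : Measure α) : ℝ :=
  ∫ x, llr P Q x ∂P

variable {W Z : Type*} [MeasurableSpace W] [MeasurableSpace Z]

/-- Population risk `L(w) = ∫ ℓ(w,z) dμ(z)`. -/
noncomputable def popRisk (μ : Measure Z) (ℓ : W × Z → ℝ) (w : W) : ℝ :=
  ∫ z, ℓ (w, z) ∂μ

/-- Empirical risk `L̂(w,s) = (1/n) ∑ i, ℓ(w, s i)`. -/
noncomputable def empRisk (n : ℕ) (ℓ : W × Z → ℝ) (w : W) (s : Fin n → Z) : ℝ :=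
  (1 / (n : ℝ)) * ∑ i, ℓ (w, s i)

/-- Expected generalization error `gen = E_P[L(W) − L̂(W,S_n)]`. -/
noncomputable def genErr (μ : Measure Z) (n : ℕ) (P : Measure (W × (Fin n → Z)))
    (ℓ : W × Z → ℝ) : ℝ :=
  ∫ p, (popRisk μ ℓ p.1 - empRisk n ℓ p.1 p.2) ∂P

/-- Expected empirical excess risk `R̂ = E_P[L̂(W,S_n) − L̂(w*,S_n)]`. -/
noncomputable def empExcess (n : ℕ) (P : Measure (W × (Fin n → Z)))
    (ℓ : W × Z → ℝ) (wstar : W) : ℝ :=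
  ∫ p, (empRisk n ℓ p.1 p.2 - empRisk n ℓ wstar p.2) ∂P

/-- Expected excess risk `R = ∫ r d(P_W ⊗ μ)` where `r(w,z) = ℓ(w,z) − ℓ(w*,z)`. -/
noncomputable def excessRisk (μ : Measure Z) {n : ℕ} (P : Measure (W × (Fin n → Z)))
    (ℓ : W × Z → ℝ) (wstar : W) : ℝ :=
  ∫ p, (ℓ p - ℓ (wstar, p.2)) ∂((P.map Prod.fst).prod μ)

/-- Joint law `P_i` of `(W, Z_i)`: the pushforward of `P` under `(w,z) ↦ (w, z_i)`. -/
noncomputable def jointLaw {n : ℕ} (P : Measure (W × (Fin n → Z))) (i : Fin n) :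
    Measure (W × Z) :=
  P.map fun p => (p.1, p.2 i)

/-- Mutual information `I(W;Z_i) = D(P_i ‖ P_W ⊗ μ)`. -/
noncomputable def mutInfo (μ : Measure Z) {n : ℕ} (P : Measure (W × (Fin n → Z)))
    (i : Fin n) : ℝ :=
  klReal (jointLaw P i) ((P.map Prod.fst).prod μ)


/-!
For each coordinate, the Donsker–Varadhan inequality for `P_i` against `P_W ⊗ μ`, tested on
`-η r`, gives `-E_{P_i}[r] ≤ I(W;Z_i)/η + (1/η) log E_{P_W ⊗ μ}[exp(-η r)]`. Jensen's inequality
for the concave map `x ↦ x ^ (η / v ε)` transfers the central condition from `v ε` down to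
`η ≤ v ε`, so the logarithmic moment is at most `η (ε - c R)`. Averaging over the coordinates
gives `c R ≤ R̂ + (1/n) ∑ (I(W;Z_i)/η + ε)`, and since every `Z_i` has law `μ`, `gen = R - R̂`.
-/

lemma MeasureTheory.MeasurePreserving.integral_comp_of_aestronglyMeasurable {α β : Type*}
    [MeasurableSpace α] [MeasurableSpace β] {μ : Measure α} {ν : Measure β} {f : α → β}
    (hf : MeasurePreserving f μ ν) {g : β → ℝ} (hg : AEStronglyMeasurable g ν) :
    ∫ x, g (f x) ∂μ = ∫ y, g y ∂ν := by
  rw [← hf.map_eq] at hg ⊢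
  exact (integral_map hf.measurable.aemeasurable hg).symm

section ExponentialMoments

variable {α : Type*} [MeasurableSpace α] {P Q : Measure α}

lemma klReal_nonneg [IsProbabilityMeasure P] [IsProbabilityMeasure Q] (hPQ : P ≪ Q)
    (hllr : Integrable (llr P Q) P) : 0 ≤ klReal P Q := by
  simpa [klReal] using InformationTheory.integral_llr_add_sub_measure_univ_nonneg hPQ hllr

lemma integral_le_klReal_add_log_integral_exp [IsProbabilityMeasure P] [IsProbabilityMeasure Q]
    (hPQ : P ≪ Q) (hllr : Integrable (llr P Q) P) {f : α → ℝ} (hfP : Integrable f P)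
    (hfQ : Integrable (fun x => exp (f x)) Q) :
    ∫ x, f x ∂P ≤ klReal P Q + log (∫ x, exp (f x) ∂Q) := by
  -- Gibbs' inequality against the tilted measure `Q.tilted f`.
  have : IsProbabilityMeasure (Q.tilted f) := isProbabilityMeasure_tilted hfQ
  have h := klReal_nonneg (hPQ.trans (absolutelyContinuous_tilted hfQ))
    (integrable_llr_tilted_right hPQ hfP hllr hfQ)
  rw [klReal, integral_llr_tilted_right hPQ hfP hfQ hllr] at h
  rw [klReal]
  linarith

lemma neg_integral_le_klReal_div_add [IsProbabilityMeasure P] [IsProbabilityMeasure Q]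
    (hPQ : P ≪ Q) (hllr : Integrable (llr P Q) P) {r : α → ℝ} (hrP : Integrable r P)
    {η b : ℝ} (hη : 0 < η) (hexp : Integrable (fun x => exp (-η * r x)) Q)
    (hlog : log (∫ x, exp (-η * r x) ∂Q) ≤ η * b) :
    -∫ x, r x ∂P ≤ klReal P Q / η + b := by
  have hdv := integral_le_klReal_add_log_integral_exp hPQ hllr (hrP.const_mul (-η)) hexp
  rw [integral_const_mul] at hdv
  refine le_of_mul_le_mul_left ?_ hη
  rw [mul_add, mul_div_cancel₀ _ hη.ne']
  linarith

lemma integrable_rpow_of_le_one [IsFiniteMeasure Q] {f : α → ℝ} (hf : Integrable f Q)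
    (hf0 : ∀ x, 0 ≤ f x) {t : ℝ} (ht0 : 0 ≤ t) (ht1 : t ≤ 1) :
    Integrable (fun x => f x ^ t) Q := by
  refine ((integrable_const 1).add hf).mono'
    ((Real.continuous_rpow_const ht0).comp_aestronglyMeasurable hf.aestronglyMeasurable)
    (ae_of_all _ fun x => ?_)
  simp only [Pi.add_apply]
  rw [Real.norm_of_nonneg (Real.rpow_nonneg (hf0 x) t)]
  rcases le_total (f x) 1 with h | h
  · linarith [Real.rpow_le_one (hf0 x) h ht0, hf0 x]
  · linarith [Real.rpow_le_self_of_one_le h ht1]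

lemma integral_rpow_le_rpow_integral [IsProbabilityMeasure Q] {f : α → ℝ}
    (hf : Integrable f Q) (hf0 : ∀ x, 0 ≤ f x) {t : ℝ} (ht0 : 0 ≤ t) (ht1 : t ≤ 1) :
    ∫ x, f x ^ t ∂Q ≤ (∫ x, f x ∂Q) ^ t :=
  (Real.concaveOn_rpow ht0 ht1).le_map_integral
    (Real.continuous_rpow_const ht0).continuousOn isClosed_Ici (ae_of_all _ hf0) hf
    (integrable_rpow_of_le_one hf hf0 ht0 ht1)

lemma integrable_exp_mul_of_le_one [IsFiniteMeasure Q] {g : α → ℝ}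
    (hg : Integrable (fun x => exp (g x)) Q) {t : ℝ} (ht0 : 0 ≤ t) (ht1 : t ≤ 1) :
    Integrable (fun x => exp (t * g x)) Q := by
  simpa only [← Real.exp_mul, mul_comm] using
    integrable_rpow_of_le_one hg (fun x => (exp_pos _).le) ht0 ht1

lemma log_integral_exp_mul_le [IsProbabilityMeasure Q] {g : α → ℝ}
    (hg : Integrable (fun x => exp (g x)) Q) {t : ℝ} (ht0 : 0 ≤ t) (ht1 : t ≤ 1) :
    log (∫ x, exp (t * g x) ∂Q) ≤ t * log (∫ x, exp (g x) ∂Q) := by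
  rw [← Real.log_rpow (integral_exp_pos hg)]
  refine Real.log_le_log (integral_exp_pos (integrable_exp_mul_of_le_one hg ht0 ht1)) ?_
  simpa only [← Real.exp_mul, mul_comm] using
    integral_rpow_le_rpow_integral hg (fun x => (exp_pos _).le) ht0 ht1

variable {r : α → ℝ} {a η b : ℝ}

lemma integrable_exp_neg_mul_of_le [IsFiniteMeasure Q] (hη : 0 ≤ η) (hηa : η ≤ a)
    (hexp : Integrable (fun x => exp (-a * r x)) Q) :
    Integrable (fun x => exp (-η * r x)) Q := by
  rcases hη.eq_or_lt with rfl | hη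
  · simp
  have ha : 0 < a := hη.trans_le hηa
  convert integrable_exp_mul_of_le_one hexp (div_pos hη ha).le ((div_le_one ha).mpr hηa)
    using 3
  field_simp

lemma log_integral_exp_neg_mul_le_of_le [IsProbabilityMeasure Q] (hη : 0 < η) (hηa : η ≤ a)
    (hexp : Integrable (fun x => exp (-a * r x)) Q)
    (hlog : log (∫ x, exp (-a * r x) ∂Q) ≤ a * b) :
    log (∫ x, exp (-η * r x) ∂Q) ≤ η * b := by
  have ha : 0 < a := hη.trans_le hηa
  have h := log_integral_exp_mul_le hexp (div_pos hη ha).le ((div_le_one ha).mpr hηa)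
  have hscale : ∀ x, η / a * (-a * r x) = -η * r x := fun x => by field_simp
  simp only [hscale] at h
  calc log (∫ x, exp (-η * r x) ∂Q) ≤ η / a * (a * b) :=
        h.trans (mul_le_mul_of_nonneg_left hlog (div_pos hη ha).le)
    _ = η * b := by field_simp

end ExponentialMoments

def excessLoss (ℓ : W × Z → ℝ) (wstar : W) (p : W × Z) : ℝ :=
  ℓ p - ℓ (wstar, p.2)

section Learning

variable {μ : Measure Z} {n : ℕ} {P : Measure (W × (Fin n → Z))} {ℓ : W × Z → ℝ}
  {wstar : W}

instance isProbabilityMeasure_map_fst [IsProbabilityMeasure P] :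
    IsProbabilityMeasure (P.map Prod.fst) :=
  Measure.isProbabilityMeasure_map measurable_fst.aemeasurable

instance isProbabilityMeasure_jointLaw [IsProbabilityMeasure P] (i : Fin n) :
    IsProbabilityMeasure (jointLaw P i) :=
  Measure.isProbabilityMeasure_map (by fun_prop)

lemma measurePreserving_eval_snd [IsProbabilityMeasure μ]
    (hmarg : P.map Prod.snd = Measure.pi fun _ : Fin n => μ) (i : Fin n) :
    MeasurePreserving (fun p => p.2 i) P μ :=
  (measurePreserving_eval (fun _ => μ) i).comp ⟨measurable_snd, hmarg⟩

lemma measurePreserving_jointLaw_snd [IsProbabilityMeasure μ]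
    (hmarg : P.map Prod.snd = Measure.pi fun _ : Fin n => μ) (i : Fin n) :
    MeasurePreserving Prod.snd (jointLaw P i) μ := by
  refine ⟨measurable_snd, ?_⟩
  rw [jointLaw, Measure.map_map measurable_snd (by fun_prop)]
  exact (measurePreserving_eval_snd hmarg i).map_eq

lemma integral_jointLaw {f : W × Z → ℝ} {i : Fin n}
    (hf : AEStronglyMeasurable f (jointLaw P i)) :
    ∫ q, f q ∂(jointLaw P i) = ∫ p, f (p.1, p.2 i) ∂P :=
  integral_map (by fun_prop) hf

lemma MeasureTheory.Integrable.comp_jointLaw {f : W × Z → ℝ} {i : Fin n}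
    (hf : Integrable f (jointLaw P i)) : Integrable (fun p => f (p.1, p.2 i)) P :=
  (integrable_map_measure hf.1 (by fun_prop)).mp hf

lemma integrable_excessLoss {ν : Measure (W × Z)} (hsnd : MeasurePreserving Prod.snd ν μ)
    (hℓ : Integrable ℓ ν) (hw : Integrable (fun z => ℓ (wstar, z)) μ) :
    Integrable (excessLoss ℓ wstar) ν :=
  hℓ.sub (hsnd.integrable_comp_of_integrable hw)

lemma integral_excessLoss {ν : Measure (W × Z)} (hsnd : MeasurePreserving Prod.snd ν μ)
    (hℓ : Integrable ℓ ν) (hw : Integrable (fun z => ℓ (wstar, z)) μ) :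
    ∫ q, excessLoss ℓ wstar q ∂ν = ∫ q, ℓ q ∂ν - ∫ z, ℓ (wstar, z) ∂μ := by
  rw [← hsnd.integral_comp_of_aestronglyMeasurable hw.1]
  exact integral_sub hℓ (hsnd.integrable_comp_of_integrable hw)

lemma excessRisk_eq [SFinite μ] [IsProbabilityMeasure P]
    (hint : Integrable ℓ ((P.map Prod.fst).prod μ))
    (hw : Integrable (fun z => ℓ (wstar, z)) μ) :
    excessRisk μ P ℓ wstar =
      ∫ q, ℓ q ∂((P.map Prod.fst).prod μ) - ∫ z, ℓ (wstar, z) ∂μ :=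
  integral_excessLoss measurePreserving_snd hint hw

lemma integrable_popRisk [SFinite μ] (hint : Integrable ℓ ((P.map Prod.fst).prod μ)) :
    Integrable (fun p => popRisk μ ℓ p.1) P :=
  (integrable_map_measure hint.integral_prod_left.1 measurable_fst.aemeasurable).mp
    hint.integral_prod_left

lemma integral_popRisk [SFinite μ] [SFinite P] (hint : Integrable ℓ ((P.map Prod.fst).prod μ)) :
    ∫ p, popRisk μ ℓ p.1 ∂P = ∫ q, ℓ q ∂((P.map Prod.fst).prod μ) := by
  rw [integral_prod _ hint]
  exact (integral_map measurable_fst.aemeasurable hint.integral_prod_left.1).symm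

lemma integrable_empRisk {g : W × (Fin n → Z) → W}
    (h : ∀ i, Integrable (fun p => ℓ (g p, p.2 i)) P) :
    Integrable (fun p => empRisk n ℓ (g p) p.2) P :=
  (integrable_finsetSum _ fun i _ => h i).const_mul _

lemma integral_empRisk {g : W × (Fin n → Z) → W}
    (h : ∀ i, Integrable (fun p => ℓ (g p, p.2 i)) P) :
    ∫ p, empRisk n ℓ (g p) p.2 ∂P = 1 / (n : ℝ) * ∑ i, ∫ p, ℓ (g p, p.2 i) ∂P := by
  simp only [empRisk]
  rw [integral_const_mul, integral_finsetSum _ fun i _ => h i]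

lemma integrable_empRisk_fst (hinti : ∀ i, Integrable ℓ (jointLaw P i)) :
    Integrable (fun p => empRisk n ℓ p.1 p.2) P :=
  integrable_empRisk (g := Prod.fst) fun i => (hinti i).comp_jointLaw

lemma integral_empRisk_fst (hinti : ∀ i, Integrable ℓ (jointLaw P i)) :
    ∫ p, empRisk n ℓ p.1 p.2 ∂P = 1 / (n : ℝ) * ∑ i, ∫ q, ℓ q ∂(jointLaw P i) := by
  simp only [integral_jointLaw (hinti _).1]
  exact integral_empRisk (g := Prod.fst) fun i => (hinti i).comp_jointLaw

lemma integrable_empRisk_const [IsProbabilityMeasure μ]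
    (hmarg : P.map Prod.snd = Measure.pi fun _ : Fin n => μ)
    (hw : Integrable (fun z => ℓ (wstar, z)) μ) :
    Integrable (fun p => empRisk n ℓ wstar p.2) P :=
  integrable_empRisk (g := fun _ => wstar) fun i =>
    (measurePreserving_eval_snd hmarg i).integrable_comp_of_integrable hw

lemma integral_empRisk_const [IsProbabilityMeasure μ] (hn : 0 < n)
    (hmarg : P.map Prod.snd = Measure.pi fun _ : Fin n => μ)
    (hw : Integrable (fun z => ℓ (wstar, z)) μ) :
    ∫ p, empRisk n ℓ wstar p.2 ∂P = ∫ z, ℓ (wstar, z) ∂μ := by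
  have heval := measurePreserving_eval_snd hmarg
  rw [integral_empRisk (g := fun _ => wstar) fun i =>
    (heval i).integrable_comp_of_integrable hw]
  simp only [fun i => (heval i).integral_comp_of_aestronglyMeasurable
    (g := fun z => ℓ (wstar, z)) hw.1]
  rw [Finset.sum_const, Finset.card_univ, Fintype.card_fin, nsmul_eq_mul]
  field_simp

lemma genErr_eq_excessRisk_sub_empExcess [IsProbabilityMeasure μ] [IsProbabilityMeasure P]
    (hn : 0 < n) (hmarg : P.map Prod.snd = Measure.pi fun _ : Fin n => μ)
    (hint : Integrable ℓ ((P.map Prod.fst).prod μ))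
    (hinti : ∀ i, Integrable ℓ (jointLaw P i)) (hw : Integrable (fun z => ℓ (wstar, z)) μ) :
    genErr μ n P ℓ = excessRisk μ P ℓ wstar - empExcess n P ℓ wstar := by
  rw [genErr, empExcess, excessRisk_eq hint hw,
    integral_sub (integrable_popRisk hint) (integrable_empRisk_fst hinti),
    integral_sub (integrable_empRisk_fst hinti) (integrable_empRisk_const hmarg hw),
    integral_popRisk hint, integral_empRisk_const hn hmarg hw]
  ring

lemma empExcess_eq [IsProbabilityMeasure μ] (hn : 0 < n)
    (hmarg : P.map Prod.snd = Measure.pi fun _ : Fin n => μ)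
    (hinti : ∀ i, Integrable ℓ (jointLaw P i)) (hw : Integrable (fun z => ℓ (wstar, z)) μ) :
    empExcess n P ℓ wstar =
      1 / (n : ℝ) * ∑ i, ∫ q, excessLoss ℓ wstar q ∂(jointLaw P i) := by
  rw [empExcess, integral_sub (integrable_empRisk_fst hinti) (integrable_empRisk_const hmarg hw),
    integral_empRisk_fst hinti, integral_empRisk_const hn hmarg hw]
  simp only [integral_excessLoss (measurePreserving_jointLaw_snd hmarg _) (hinti _) hw]
  rw [Finset.sum_sub_distrib, Finset.sum_const, Finset.card_univ, Fintype.card_fin, nsmul_eq_mul]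
  field_simp

lemma mul_excessRisk_le_empExcess_add [IsProbabilityMeasure μ] [IsProbabilityMeasure P]
    (hn : 0 < n) (hmarg : P.map Prod.snd = Measure.pi fun _ : Fin n => μ)
    (hinti : ∀ i, Integrable ℓ (jointLaw P i)) (hw : Integrable (fun z => ℓ (wstar, z)) μ)
    (hac : ∀ i, jointLaw P i ≪ (P.map Prod.fst).prod μ)
    (hllr : ∀ i, Integrable (llr (jointLaw P i) ((P.map Prod.fst).prod μ)) (jointLaw P i))
    {c η ε : ℝ} (hη : 0 < η)
    (hexp : Integrable (fun q => exp (-η * excessLoss ℓ wstar q)) ((P.map Prod.fst).prod μ))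
    (hlog : log (∫ q, exp (-η * excessLoss ℓ wstar q) ∂((P.map Prod.fst).prod μ)) ≤
      η * (ε - c * excessRisk μ P ℓ wstar)) :
    c * excessRisk μ P ℓ wstar ≤
      empExcess n P ℓ wstar + 1 / (n : ℝ) * ∑ i, (mutInfo μ P i / η + ε) := by
  have hcoord (i : Fin n) : c * excessRisk μ P ℓ wstar ≤
      ∫ q, excessLoss ℓ wstar q ∂(jointLaw P i) + (mutInfo μ P i / η + ε) := by
    have := neg_integral_le_klReal_div_add (hac i) (hllr i)
      (integrable_excessLoss (measurePreserving_jointLaw_snd hmarg i) (hinti i) hw) hη hexp hlog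
    rw [mutInfo]
    linarith
  rw [empExcess_eq hn hmarg hinti hw, ← mul_add, ← Finset.sum_add_distrib]
  calc c * excessRisk μ P ℓ wstar
      = 1 / (n : ℝ) * ∑ _i : Fin n, c * excessRisk μ P ℓ wstar := by
        rw [Finset.sum_const, Finset.card_univ, Fintype.card_fin, nsmul_eq_mul]
        field_simp
    _ ≤ _ := by gcongr with i; exact hcoord i

end Learning

theorem v_c_central_intermediate_general
    (μ : Measure Z) [IsProbabilityMeasure μ] (n : ℕ) (hn : 0 < n)
    (P : Measure (W × (Fin n → Z))) [IsProbabilityMeasure P]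
    (hmarg : P.map Prod.snd = Measure.pi fun _ : Fin n => μ)
    (ℓ : W × Z → ℝ) (wstar : W)
    (hint : Integrable ℓ ((P.map Prod.fst).prod μ))
    (hinti : ∀ i : Fin n, Integrable ℓ (jointLaw P i))
    (hintw : Integrable (fun z => ℓ (wstar, z)) μ)
    (hac : ∀ i : Fin n, jointLaw P i ≪ (P.map Prod.fst).prod μ)
    (hIfin : ∀ i : Fin n, Integrable (llr (jointLaw P i) ((P.map Prod.fst).prod μ))
      (jointLaw P i))
    (v : ℝ → ℝ)
    (c : ℝ) (hc : 0 < c)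
    (hmgfInt : ∀ ε : ℝ, 0 ≤ ε →
      Integrable (fun p => Real.exp (-(v ε) * (ℓ p - ℓ (wstar, p.2))))
        ((P.map Prod.fst).prod μ))
    (hcentral : ∀ ε : ℝ, 0 ≤ ε →
      Real.log (∫ p, Real.exp (-(v ε) * (ℓ p - ℓ (wstar, p.2)))
          ∂((P.map Prod.fst).prod μ)) ≤
        -c * v ε * excessRisk μ P ℓ wstar + v ε * ε) :
    ∀ ε : ℝ, 0 ≤ ε → ∀ η : ℝ, 0 < η → η ≤ v ε →
      genErr μ n P ℓ ≤
        ((1 - c) / c) * empExcess n P ℓ wstar +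
          (1 / (n : ℝ)) * ∑ i : Fin n, (mutInfo μ P i / (η * c) + ε / c) := by
  intro ε hε η hη hηv
  have hexp := integrable_exp_neg_mul_of_le (r := excessLoss ℓ wstar) hη.le hηv (hmgfInt ε hε)
  have hlog := log_integral_exp_neg_mul_le_of_le (r := excessLoss ℓ wstar)
    (b := ε - c * excessRisk μ P ℓ wstar) hη hηv (hmgfInt ε hε)
    ((hcentral ε hε).trans_eq (by ring))
  have hcR := mul_excessRisk_le_empExcess_add hn hmarg hinti hintw hac hIfin hη hexp hlog
  set S := 1 / (n : ℝ) * ∑ i, (mutInfo μ P i / η + ε)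
  have hsum : 1 / (n : ℝ) * ∑ i, (mutInfo μ P i / (η * c) + ε / c) = S / c := by
    rw [mul_div_assoc, Finset.sum_div]
    congr 1
    refine Finset.sum_congr rfl fun i _ => ?_
    field_simp
  rw [genErr_eq_excessRisk_sub_empExcess hn hmarg hint hinti hintw, hsum, div_mul_eq_mul_div,
    ← add_div, le_div_iff₀ hc]
  linarith

theorem v_c_central_intermediate
    (μ : Measure Z) [IsProbabilityMeasure μ] (n : ℕ) (hn : 0 < n)
    (P : Measure (W × (Fin n → Z))) [IsProbabilityMeasure P]
    (hmarg : P.map Prod.snd = Measure.pi fun _ : Fin n => μ)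
    (ℓ : W × Z → ℝ) (hℓ : Measurable ℓ) (wstar : W)
    (hint : Integrable ℓ ((P.map Prod.fst).prod μ))
    (hinti : ∀ i : Fin n, Integrable ℓ (jointLaw P i))
    (hintw : Integrable (fun z => ℓ (wstar, z)) μ)
    (hac : ∀ i : Fin n, jointLaw P i ≪ (P.map Prod.fst).prod μ)
    (hIfin : ∀ i : Fin n, Integrable (llr (jointLaw P i) ((P.map Prod.fst).prod μ))
      (jointLaw P i))
    (v : ℝ → ℝ) (hv0 : ∀ ε : ℝ, 0 ≤ ε → 0 ≤ v ε)
    (hvmono : ∀ ε₁ ε₂ : ℝ, 0 ≤ ε₁ → ε₁ ≤ ε₂ → v ε₁ ≤ v ε₂)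
    (hvpos : ∀ ε : ℝ, 0 < ε → 0 < v ε)
    (c : ℝ) (hc : 0 < c) (hc1 : c < 1)
    (hR : 0 < excessRisk μ P ℓ wstar)
    (hmgfInt : ∀ ε : ℝ, 0 ≤ ε →
      Integrable (fun p => Real.exp (-(v ε) * (ℓ p - ℓ (wstar, p.2))))
        ((P.map Prod.fst).prod μ))
    (hcentral : ∀ ε : ℝ, 0 ≤ ε →
      Real.log (∫ p, Real.exp (-(v ε) * (ℓ p - ℓ (wstar, p.2)))
          ∂((P.map Prod.fst).prod μ)) ≤
        -c * v ε * excessRisk μ P ℓ wstar + v ε * ε) :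
    ∀ ε : ℝ, 0 ≤ ε → ∀ η : ℝ, 0 < η → η ≤ v ε →
      genErr μ n P ℓ ≤
        ((1 - c) / c) * empExcess n P ℓ wstar +
          (1 / (n : ℝ)) * ∑ i : Fin n, (mutInfo μ P i / (η * c) + ε / c) :=
  v_c_central_intermediate_general μ n hn P hmarg ℓ wstar hint hinti hintw hac hIfin v c hc hmgfInt
    hcentral
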